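/- arXiv:1712.04635 — 3 statements merged into one kernel-verified Lean document; each statement's English description precedes it below -/
import Mathlib

section
/- For every integer m ≥ 1, the identity ξ_{m+1} = x·(1 − y)·ξ_m + (1 − x·y)^{m+1} holds in ℤ[x,y]. -/
/-!
Multiplying by `1 - x` telescopes the inner geometric sums of `ξ_m` and turns the outer sums
into truncated binomial expansions, which gives the closed form
`(1 - x) ξ_m = (1 - xy)^(m+1) - x^m (1 - y)^(m+1)` for every `m ≥ 0`. The recursion is then an
identity between these closed forms, and `1 - x` can be cancelled in the domain `ℤ[x,y]`.
-/

open MvPolynomial Finset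

/-- The polynomial `ξ_m ∈ ℤ[x,y]`, where `X 0` plays the role of `x` and `X 1` of `y`:
`ξ_m = (−1)^m x^m y^(m+1) + Σ_{j=0}^{m−1} Σ_{i=j}^{m−1} (−1)^j C(m+1,j) x^i y^j`. -/
noncomputable def xi (m : ℕ) : MvPolynomial (Fin 2) ℤ :=
  (-1) ^ m * X 0 ^ m * X 1 ^ (m + 1) +
    ∑ j ∈ Finset.range m, ∑ i ∈ Finset.Icc j (m - 1),
      (-1) ^ j * ((m + 1).choose j : MvPolynomial (Fin 2) ℤ) * X 0 ^ i * X 1 ^ j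

section CommRing

variable {R : Type*} [CommRing R]

theorem one_sub_pow_succ_eq_sum_range_add (a : R) (m : ℕ) :
    (1 - a) ^ (m + 1) = ∑ j ∈ range m, (-1) ^ j * ((m + 1).choose j : R) * a ^ j +
      (-1) ^ m * (m + 1) * a ^ m + (-1) ^ (m + 1) * a ^ (m + 1) := by
  rw [sub_eq_neg_add, add_pow, sum_range_succ, sum_range_succ, Nat.choose_self,
    Nat.choose_succ_self_right]
  simp only [neg_pow a, one_pow, mul_one, Nat.sub_self, Nat.cast_add_one]
  rw [sum_congr rfl fun j _ => mul_right_comm ((-1) ^ j) (a ^ j) _]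
  ring

theorem one_sub_mul_sum_range_sum_Icc (x y : R) (c : ℕ → R) (m : ℕ) :
    (1 - x) * ∑ j ∈ range m, ∑ i ∈ Icc j (m - 1), c j * x ^ i * y ^ j =
      ∑ j ∈ range m, c j * (x * y) ^ j - x ^ m * ∑ j ∈ range m, c j * y ^ j := by
  rw [mul_sum, mul_sum, ← sum_sub_distrib]
  refine sum_congr rfl fun j hj => ?_
  have hjm : j < m := mem_range.mp hj
  have hIcc : Icc j (m - 1) = Ico j m := by
    rw [← Ico_add_one_right_eq_Icc, Nat.sub_add_cancel (by omega)]
  calc (1 - x) * ∑ i ∈ Icc j (m - 1), c j * x ^ i * y ^ j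
      = c j * y ^ j * ((∑ i ∈ Ico j m, x ^ i) * (1 - x)) := by
        rw [hIcc, sum_mul, mul_sum, mul_sum]
        exact sum_congr rfl fun i _ => by ring
    _ = c j * (x * y) ^ j - x ^ m * (c j * y ^ j) := by
        rw [geom_sum_Ico_mul_neg x hjm.le]
        ring

end CommRing

theorem one_sub_X_mul_xi (m : ℕ) :
    (1 - X 0) * xi m = (1 - X 0 * X 1) ^ (m + 1) - X 0 ^ m * (1 - X 1) ^ (m + 1) := by
  rw [xi, mul_add,
    one_sub_mul_sum_range_sum_Icc (c := fun j => (-1) ^ j * ((m + 1).choose j : MvPolynomial _ ℤ)),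
    one_sub_pow_succ_eq_sum_range_add (X 0 * X 1), one_sub_pow_succ_eq_sum_range_add (X 1)]
  ring

theorem stmt_1_general (m : ℕ) :
    xi (m + 1) = X 0 * (1 - X 1) * xi m + (1 - X 0 * X 1) ^ (m + 1) := by
  have hx : (1 - X 0 : MvPolynomial (Fin 2) ℤ) ≠ 0 := fun h => by
    simpa using congrArg (eval 0) h
  apply mul_left_cancel₀ hx
  linear_combination one_sub_X_mul_xi (m + 1) - X 0 * (1 - X 1) * one_sub_X_mul_xi m

theorem stmt_1 (m : ℕ) (hm : 1 ≤ m) :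
    xi (m + 1) = X 0 * (1 - X 1) * xi m + (1 - X 0 * X 1) ^ (m + 1) :=
  stmt_1_general m
end

section
/- For every integer m ≥ 1, applying the formal partial derivative with respect to x exactly m times to ξ_m and then evaluating at x = 1, y = 1 gives (−1)^m · m!. In particular ξ_m vanishes to order exactly m at the point (1,1). -/
open MvPolynomial Finset

/-!
Write `u = x - 1`, `v = y - 1`. Summing the geometric series in `x` gives
`u ξ_m = x^m (1 - y)^(m+1) - (1 - x y)^(m+1)`; expanding `1 - x y = -(u + v x)` binomially
and cancelling `u` yields `ξ_m = (-1)^m (u^m + v Q_m)` with `Q_m ∈ (u, v)^(m-1)`.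
Hence `ξ_m ∈ (u, v)^m`; as `∂ₓ` commutes with multiplication by `v`, `∂ₓ^m ξ_m` at
`(1, 1)` is `(-1)^m m!`; and the substitution `x ↦ X + 1`, `y ↦ 1` sends `(u, v)` onto `(X)`
and `ξ_m` to `(-1)^m X^m`, which `X^(m+1)` does not divide.
-/

open scoped Nat

section IteratePDeriv

variable {R σ : Type*} (i : σ)

theorem iterate_pderiv_mul_of_pderiv_eq_zero [CommSemiring R] {a : MvPolynomial σ R}
    (ha : pderiv i a = 0) (n : ℕ) (p : MvPolynomial σ R) :
    (pderiv i)^[n] (a * p) = a * (pderiv i)^[n] p :=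
  Function.Commute.iterate_left (f := pderiv i) (g := (a * ·))
    (fun q => by simp only [pderiv_mul, ha, zero_mul, zero_add]) n p

theorem iterate_pderiv_X_sub_C_pow [CommRing R] (c : R) (n : ℕ) :
    (pderiv i)^[n] ((X i - C c) ^ n) = (n ! : MvPolynomial σ R) := by
  induction n with
  | zero => simp
  | succ n ih =>
    have hcast : pderiv i ((n + 1 : ℕ) : MvPolynomial σ R) = 0 := (pderiv i).map_natCast _
    rw [Function.iterate_succ_apply, pderiv_pow, Nat.add_sub_cancel, map_sub, pderiv_X_self,
      pderiv_C, sub_zero, mul_one, iterate_pderiv_mul_of_pderiv_eq_zero i hcast, ih,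
      Nat.factorial_succ, Nat.cast_mul]

end IteratePDeriv

theorem X_zero_sub_one_mul_xi (m : ℕ) :
    (X 0 - 1) * xi m = X 0 ^ m * (1 - X 1) ^ (m + 1) - (1 - X 0 * X 1) ^ (m + 1) := by
  have inner : ∀ j ∈ range m, (X 0 - 1) * ∑ i ∈ Icc j (m - 1),
      (-1) ^ j * ((m + 1).choose j : MvPolynomial (Fin 2) ℤ) * X 0 ^ i * X 1 ^ j =
      (-1) ^ j * ((m + 1).choose j : MvPolynomial (Fin 2) ℤ) * X 1 ^ j * (X 0 ^ m - X 0 ^ j) := by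
    intro j hj
    have hjm := mem_range.mp hj
    rw [Icc_sub_one_right_eq_Ico_of_not_isMin (not_isMin_iff_ne_bot.mpr (Nat.ne_zero_of_lt hjm)),
      ← geom_sum_Ico_mul _ hjm.le, mul_sum, sum_mul, mul_sum]
    exact sum_congr rfl fun i _ => by ring
  have binom : ∀ z : MvPolynomial (Fin 2) ℤ, (1 - z) ^ (m + 1) =
      ∑ j ∈ range (m + 2), (-z) ^ j * ((m + 1).choose j : MvPolynomial (Fin 2) ℤ) := by
    intro z
    rw [sub_eq_neg_add, add_pow]
    simp only [one_pow, mul_one]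
  have body : ∑ j ∈ range m,
      (-1) ^ j * ((m + 1).choose j : MvPolynomial (Fin 2) ℤ) * X 1 ^ j * (X 0 ^ m - X 0 ^ j) =
      X 0 ^ m * ∑ j ∈ range m, (-X 1) ^ j * ((m + 1).choose j : MvPolynomial (Fin 2) ℤ) -
        ∑ j ∈ range m, (-(X 0 * X 1)) ^ j * ((m + 1).choose j : MvPolynomial (Fin 2) ℤ) := by
    rw [mul_sum, ← sum_sub_distrib]
    exact sum_congr rfl fun j _ => by ring
  rw [xi, mul_add, mul_sum, sum_congr rfl inner, body, binom, binom, sum_range_succ,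
    sum_range_succ, sum_range_succ _ (m + 1), sum_range_succ _ m, Nat.choose_self,
    Nat.choose_succ_self_right]
  push_cast
  ring

noncomputable def xiCofactor (m : ℕ) : MvPolynomial (Fin 2) ℤ :=
  X 0 ^ m * (X 1 - 1) ^ m +
    ∑ i ∈ range m, ((m + 1).choose (i + 1) : MvPolynomial (Fin 2) ℤ) *
      (X 0 - 1) ^ i * (X 1 - 1) ^ (m - 1 - i) * X 0 ^ (m - i)

theorem X_zero_sub_one_mul_xiCofactor (m : ℕ) :
    (X 0 - 1) * ((X 0 - 1) ^ m + (X 1 - 1) * xiCofactor m) =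
      (-1) ^ m * (X 0 ^ m * (1 - X 1) ^ (m + 1) - (1 - X 0 * X 1) ^ (m + 1)) := by
  have h1 : (1 - X 1 : MvPolynomial (Fin 2) ℤ) = -(X 1 - 1) := by ring
  have h2 : (1 - X 0 * X 1 : MvPolynomial (Fin 2) ℤ) = -((X 0 - 1) + (X 1 - 1) * X 0) := by ring
  have hsign : ((-1) ^ m * (-1) ^ m : MvPolynomial (Fin 2) ℤ) = 1 := by
    rw [← mul_pow, neg_one_mul, neg_neg, one_pow]
  rw [xiCofactor, h1, h2, neg_pow, neg_pow (_ + _)]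
  set u : MvPolynomial (Fin 2) ℤ := X 0 - 1 with hu
  set v : MvPolynomial (Fin 2) ℤ := X 1 - 1
  set S : MvPolynomial (Fin 2) ℤ := ∑ i ∈ range m,
      ((m + 1).choose (i + 1) : MvPolynomial (Fin 2) ℤ) * u ^ i * v ^ (m - 1 - i) * X 0 ^ (m - i)
    with hS
  clear_value u v S
  have middle : ∑ k ∈ range m,
      u ^ (k + 1) * (v * X 0) ^ (m + 1 - (k + 1)) *
        ((m + 1).choose (k + 1) : MvPolynomial (Fin 2) ℤ) = u * v * S := by
    rw [hS, mul_sum]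
    refine sum_congr rfl fun i hi => ?_
    have hi := mem_range.mp hi
    rw [show m + 1 - (i + 1) = m - 1 - i + 1 by omega, show m - i = m - 1 - i + 1 by omega]
    ring
  have expand : (u + v * X 0) ^ (m + 1) = u ^ (m + 1) + u * v * S + (v * X 0) ^ (m + 1) := by
    rw [add_pow, sum_range_succ, sum_range_succ', middle]
    simp only [Nat.choose_self, Nat.choose_zero_right, Nat.sub_self, Nat.sub_zero, pow_zero,
      Nat.cast_one, mul_one, one_mul]
    ring
  rw [expand]
  linear_combination
    (X 0 ^ m * v ^ (m + 1) - u ^ (m + 1) - u * v * S - (v * X 0) ^ (m + 1)) * hsign +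
      v ^ (m + 1) * X 0 ^ m * hu

theorem xi_eq_neg_one_pow_mul (m : ℕ) :
    xi m = (-1) ^ m * ((X 0 - 1) ^ m + (X 1 - 1) * xiCofactor m) := by
  have hu : (X 0 - 1 : MvPolynomial (Fin 2) ℤ) ≠ 0 := fun h => by
    simpa using congrArg (eval 0) h
  refine mul_left_cancel₀ hu ?_
  rw [X_zero_sub_one_mul_xi, mul_left_comm, X_zero_sub_one_mul_xiCofactor, ← mul_assoc,
    ← mul_pow, neg_one_mul, neg_neg, one_pow, one_mul]

theorem eval_iterate_pderiv_xi (m : ℕ) :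
    eval (fun _ => 1) ((pderiv 0)^[m] (xi m)) = (-1) ^ m * (m ! : ℤ) := by
  have hsign : pderiv 0 ((-1) ^ m : MvPolynomial (Fin 2) ℤ) = 0 := by simp
  have hv : pderiv 0 (X 1 - 1 : MvPolynomial (Fin 2) ℤ) = 0 := by simp
  have hu := iterate_pderiv_X_sub_C_pow (0 : Fin 2) (1 : ℤ) m
  rw [C_1] at hu
  rw [xi_eq_neg_one_pow_mul, iterate_pderiv_mul_of_pderiv_eq_zero 0 hsign, iterate_map_add,
    iterate_pderiv_mul_of_pderiv_eq_zero 0 hv, hu]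
  simp

theorem X_sub_one_mem_span (i : Fin 2) :
    (X i - 1 : MvPolynomial (Fin 2) ℤ) ∈ Ideal.span {X 0 - 1, X 1 - 1} := by
  fin_cases i <;> exact Ideal.subset_span (by simp)

theorem xiCofactor_mem_pow (m : ℕ) :
    xiCofactor m ∈
      (Ideal.span {X 0 - 1, X 1 - 1} : Ideal (MvPolynomial (Fin 2) ℤ)) ^ (m - 1) := by
  set I : Ideal (MvPolynomial (Fin 2) ℤ) := Ideal.span {X 0 - 1, X 1 - 1}
  refine Ideal.add_mem _ ?_ (Ideal.sum_mem _ fun i hi => ?_)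
  · exact Ideal.mul_mem_left _ _
      (Ideal.pow_le_pow_right (Nat.sub_le m 1) (Ideal.pow_mem_pow (X_sub_one_mem_span 1) m))
  · obtain ⟨k, hk⟩ : ∃ k, m - 1 = i + k := ⟨m - 1 - i, by have := mem_range.mp hi; omega⟩
    have hmon : (X 0 - 1) ^ i * (X 1 - 1) ^ (m - 1 - i) ∈ I ^ (m - 1) := by
      rw [hk, Nat.add_sub_cancel_left, pow_add]
      exact Ideal.mul_mem_mul (Ideal.pow_mem_pow (X_sub_one_mem_span 0) i)
        (Ideal.pow_mem_pow (X_sub_one_mem_span 1) k)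
    rw [mul_assoc _ (_ ^ i)]
    exact Ideal.mul_mem_right _ _ (Ideal.mul_mem_left _ _ hmon)

theorem xi_mem_pow (m : ℕ) :
    xi m ∈ (Ideal.span {X 0 - 1, X 1 - 1} : Ideal (MvPolynomial (Fin 2) ℤ)) ^ m := by
  have hcof : (X 1 - 1) * xiCofactor m ∈
      (Ideal.span {X 0 - 1, X 1 - 1} : Ideal (MvPolynomial (Fin 2) ℤ)) ^ (m - 1 + 1) := by
    rw [pow_succ']
    exact Ideal.mul_mem_mul (X_sub_one_mem_span 1) (xiCofactor_mem_pow m)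
  rw [xi_eq_neg_one_pow_mul]
  exact Ideal.mul_mem_left _ _ <| Ideal.add_mem _ (Ideal.pow_mem_pow (X_sub_one_mem_span 0) m)
    (Ideal.pow_le_pow_right (by omega) hcof)

theorem xi_notMem_pow_succ (m : ℕ) :
    xi m ∉ (Ideal.span {X 0 - 1, X 1 - 1} : Ideal (MvPolynomial (Fin 2) ℤ)) ^ (m + 1) := by
  let f : MvPolynomial (Fin 2) ℤ →ₐ[ℤ] Polynomial ℤ := aeval ![Polynomial.X + 1, 1]
  have hu : f (X 0 - 1) = Polynomial.X := by simp [f]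
  have hv : f (X 1 - 1) = 0 := by simp [f]
  have hI : Ideal.map f (Ideal.span {X 0 - 1, X 1 - 1}) = Ideal.span {Polynomial.X} := by
    rw [Ideal.map_span, Set.image_pair, hu, hv, Set.pair_comm, Ideal.span_insert_zero]
  intro h
  have h' := Ideal.mem_map_of_mem f h
  rw [Ideal.map_pow, hI, Ideal.span_singleton_pow, Ideal.mem_span_singleton,
    xi_eq_neg_one_pow_mul, map_mul, map_add, map_mul, hv, zero_mul, add_zero, map_pow, map_pow, hu,
    map_neg, map_one,
    (isUnit_neg_one.pow m).dvd_mul_left,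
    pow_dvd_pow_iff Polynomial.X_ne_zero Polynomial.not_isUnit_X] at h'
  omega

theorem stmt_3_general (m : ℕ) :
    MvPolynomial.eval (fun _ => (1 : ℤ)) ((MvPolynomial.pderiv 0)^[m] (xi m)) =
      (-1) ^ m * (m.factorial : ℤ) ∧
    xi m ∈ (Ideal.span {X 0 - 1, X 1 - 1} : Ideal (MvPolynomial (Fin 2) ℤ)) ^ m ∧
    xi m ∉ (Ideal.span {X 0 - 1, X 1 - 1} : Ideal (MvPolynomial (Fin 2) ℤ)) ^ (m + 1) :=
  ⟨eval_iterate_pderiv_xi m, xi_mem_pow m, xi_notMem_pow_succ m⟩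

theorem stmt_3 (m : ℕ) (hm : 1 ≤ m) :
    MvPolynomial.eval (fun _ => (1 : ℤ)) ((MvPolynomial.pderiv 0)^[m] (xi m)) =
      (-1) ^ m * (m.factorial : ℤ) ∧
    xi m ∈ (Ideal.span {X 0 - 1, X 1 - 1} : Ideal (MvPolynomial (Fin 2) ℤ)) ^ m ∧
    xi m ∉ (Ideal.span {X 0 - 1, X 1 - 1} : Ideal (MvPolynomial (Fin 2) ℤ)) ^ (m + 1) :=
  stmt_3_general m
end

section
/- Let k be an algebraically closed field of characteristic zero, let m ≥ 1 be an integer, and let α, β be rational numbers satisfying the KN(m) bounds. Then there is NO polynomial ζ ∈ k[x,y] with all of the following properties: (a) ζ lies in the m·(m+1)-th power of the ideal of k[x,y] generated by (x − 1) and (y − 1); (b) the constant coefficient of ζ is nonzero; (c) every pair (i,j) ∈ ℕ² for which the coefficient of x^i·y^j in ζ is nonzero satisfies the inequalities (m+1)·i ≥ (m+α)·j and (m+1)·(i − m²) ≤ (1−β)·j (as inequalities of rational numbers). -/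
/-!
Restricting `ζ` to the line `y = 1` gives a one-variable polynomial `p` divisible by
`(x - 1)^{m(m+1)}`. Since the left edge of the Newton triangle meets the `y`-axis only at the
origin, the constant term of `p` is that of `ζ`; so `p ≠ 0`, `deg p ≥ m(m+1)`, and some monomial
`x^i y^j` of `ζ` has `i ≥ m(m+1)`. No lattice point of the triangle has this property when `α > 0` and
`β > 1/(m+2)`: for `i = m(m+1)` the two edges squeeze `j` strictly between `m(m+2)` and `(m+1)²`,
and for larger `i` eliminating `j` forces `(m+1)α + (m²+m+1)β ≤ 1`.
-/

open MvPolynomial Finset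

/-- The Kurano–Nishida bounds `KN(m)` on a pair of real numbers `(α, β)`:
`0 < α < 1/(1+(m+1)+(m+1)²)` and
`1/(m+2) < β < 1 − 1/(1 + 1/(m+1) + 1/(m+1)² − α/(1−(m+2)α))`. -/
def KNBounds (m : ℕ) (α β : ℝ) : Prop :=
  0 < α ∧ α < 1 / (1 + ((m : ℝ) + 1) + ((m : ℝ) + 1) ^ 2) ∧
  1 / ((m : ℝ) + 2) < β ∧
  β < 1 - 1 / (1 + 1 / ((m : ℝ) + 1) + 1 / ((m : ℝ) + 1) ^ 2 -
    α / (1 - ((m : ℝ) + 2) * α))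

section
variable {R : Type*} [CommRing R]

lemma X_sub_one_pow_dvd_aeval_of_mem {n : ℕ} {ζ : MvPolynomial (Fin 2) R}
    (hζ : ζ ∈ (Ideal.span {X 0 - 1, X 1 - 1} : Ideal (MvPolynomial (Fin 2) R)) ^ n) :
    (Polynomial.X - 1 : Polynomial R) ^ n ∣ aeval ![Polynomial.X, 1] ζ := by
  have h := Ideal.mem_map_of_mem (aeval ![Polynomial.X, (1 : Polynomial R)]) hζ
  rw [Ideal.map_pow, Ideal.map_span, Set.image_pair] at h
  simpa [Ideal.span_insert_zero, Ideal.span_singleton_pow, Ideal.mem_span_singleton] using h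

lemma coeff_aeval_X_one (ζ : MvPolynomial (Fin 2) R) (N : ℕ) :
    (aeval ![Polynomial.X, (1 : Polynomial R)] ζ).coeff N =
      ∑ d ∈ ζ.support with d 0 = N, coeff d ζ := by
  rw [aeval_def, eval₂_eq', Polynomial.finsetSum_coeff, sum_filter]
  refine sum_congr rfl fun d _ => ?_
  simp [Fin.prod_univ_two, Polynomial.coeff_C_mul, Polynomial.coeff_X_pow, eq_comm]

end

lemma exists_mem_support_le_fst {R : Type*} [CommRing R] [IsDomain R] {n : ℕ}
    {ζ : MvPolynomial (Fin 2) R}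
    (hζ : ζ ∈ (Ideal.span {X 0 - 1, X 1 - 1} : Ideal (MvPolynomial (Fin 2) R)) ^ n)
    (h0 : coeff 0 ζ ≠ 0) (haxis : ∀ d ∈ ζ.support, d 0 = 0 → d = 0) :
    ∃ d ∈ ζ.support, n ≤ d 0 := by
  set p := aeval ![Polynomial.X, (1 : Polynomial R)] ζ
  have hp0 : p.coeff 0 = coeff 0 ζ := by
    rw [coeff_aeval_X_one, sum_eq_single_of_mem 0]
    · simpa using h0
    · intro d hd hd0
      rw [mem_filter] at hd
      exact absurd (haxis d hd.1 hd.2) hd0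
  have hp : p ≠ 0 := fun hp => h0 (by rw [← hp0, hp, Polynomial.coeff_zero])
  have hn : n ≤ p.natDegree := by
    have := Polynomial.natDegree_le_of_dvd (X_sub_one_pow_dvd_aeval_of_mem hζ) hp
    rwa [Polynomial.natDegree_pow, ← Polynomial.C_1, Polynomial.natDegree_X_sub_C, mul_one] at this
  by_contra! hlt
  refine Polynomial.leadingCoeff_ne_zero.2 hp ?_
  rw [Polynomial.leadingCoeff, coeff_aeval_X_one]
  refine sum_eq_zero fun d hd => ?_
  rw [mem_filter] at hd
  exact absurd hd.2 ((hlt d hd.1).trans_le hn).ne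

lemma fst_lt_of_mem_newtonTriangle {m i j : ℕ} {α β : ℚ} (hm : 1 ≤ m) (hα : 0 < α)
    (hβ : 1 / ((m : ℚ) + 2) < β) (h1 : ((m : ℚ) + 1) * i ≥ (m + α) * j)
    (h2 : ((m : ℚ) + 1) * (i - m ^ 2) ≤ (1 - β) * j) : i < m * (m + 1) := by
  by_contra! hi
  have hm : (1 : ℚ) ≤ m := by exact_mod_cast hm
  have hβ : 1 < (m + 2) * β := by rwa [div_lt_iff₀ (by positivity), mul_comm] at hβ
  have hj : (0 : ℚ) ≤ j := j.cast_nonneg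
  have hi' : (m : ℚ) * (m + 1) ≤ i := by exact_mod_cast hi
  have h2_pos : 0 < (1 - β) * j := by nlinarith
  have hβ_lt : β < 1 := by nlinarith
  rcases hi.eq_or_lt with hi | hi
  · have hi : (i : ℚ) = m * (m + 1) := by rw [← hi]; push_cast; ring
    rw [hi] at h1 h2
    have hj_lt : (j : ℚ) < m * (m + 2) + 1 := by nlinarith
    have hj_gt : (m : ℚ) * (m + 2) < j := by nlinarith
    have : m * (m + 2) < j := by exact_mod_cast hj_gt
    have : j < m * (m + 2) + 1 := by exact_mod_cast hj_lt
    omega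
  · have hi : (m : ℚ) * (m + 1) + 1 ≤ i := by exact_mod_cast Nat.succ_le_of_lt hi
    have h_elim : (i : ℚ) * (m + α - 1 + β) ≤ m ^ 2 * (m + α) := by nlinarith
    have hβ_pos : 0 < β := by nlinarith
    have key : (m + 1) * α + (m ^ 2 + m + 1) * β ≤ 1 := by
      nlinarith [mul_le_mul_of_nonneg_right hi (by linarith : (0 : ℚ) ≤ m + α - 1 + β)]
    nlinarith

lemma single_zero_add_single_one (d : Fin 2 →₀ ℕ) :
    Finsupp.single 0 (d 0) + Finsupp.single 1 (d 1) = d := by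
  conv_rhs => rw [← Finsupp.univ_sum_single d, Fin.sum_univ_two]

theorem stmt_11_general (k : Type*) [Field k]
    (m : ℕ) (hm : 1 ≤ m) (α β : ℚ)
    (h : KNBounds m (α : ℝ) (β : ℝ)) :
    ¬ ∃ ζ : MvPolynomial (Fin 2) k,
        -- (a) ζ vanishes to order m(m+1) at (1,1)
        ζ ∈ (Ideal.span {X 0 - 1, X 1 - 1} :
              Ideal (MvPolynomial (Fin 2) k)) ^ (m * (m + 1)) ∧
        -- (b) the constant coefficient of ζ is nonzero
        MvPolynomial.coeff 0 ζ ≠ 0 ∧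
        -- (c) the Newton polygon condition
        (∀ i j : ℕ, MvPolynomial.coeff (Finsupp.single 0 i + Finsupp.single 1 j) ζ ≠ 0 →
          ((m : ℚ) + 1) * (i : ℚ) ≥ ((m : ℚ) + α) * (j : ℚ) ∧
          ((m : ℚ) + 1) * ((i : ℚ) - (m : ℚ) ^ 2) ≤ (1 - β) * (j : ℚ)) := by
  rintro ⟨ζ, hζ, h0, hc⟩
  obtain ⟨hα, -, hβ, -⟩ := h
  have hα : 0 < α := by exact_mod_cast hα
  have hβ : 1 / ((m : ℚ) + 2) < β := by
    rw [← Rat.cast_lt (K := ℝ)]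
    push_cast
    exact hβ
  have hc : ∀ d ∈ ζ.support, _ := fun d hd =>
    hc (d 0) (d 1) (by rwa [single_zero_add_single_one, ← mem_support_iff])
  have haxis : ∀ d ∈ ζ.support, d 0 = 0 → d = 0 := by
    intro d hd hd0
    have hj : ((m : ℚ) + α) * (d 1 : ℚ) ≤ 0 := by simpa [hd0] using (hc d hd).1
    have hd1 : d 1 = 0 := by
      exact_mod_cast le_antisymm (nonpos_of_mul_nonpos_right hj (by positivity)) (by positivity)
    rw [← single_zero_add_single_one d, hd0, hd1, Finsupp.single_zero, Finsupp.single_zero, add_zero]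
  obtain ⟨d, hd, hle⟩ := exists_mem_support_le_fst hζ h0 haxis
  obtain ⟨h1, h2⟩ := hc d hd
  exact (fst_lt_of_mem_newtonTriangle hm hα hβ h1 h2).not_ge hle

theorem stmt_11 (k : Type*) [Field k] [IsAlgClosed k] [CharZero k]
    (m : ℕ) (hm : 1 ≤ m) (α β : ℚ)
    (h : KNBounds m (α : ℝ) (β : ℝ)) :
    ¬ ∃ ζ : MvPolynomial (Fin 2) k,
        -- (a) ζ vanishes to order m(m+1) at (1,1)
        ζ ∈ (Ideal.span {X 0 - 1, X 1 - 1} :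
              Ideal (MvPolynomial (Fin 2) k)) ^ (m * (m + 1)) ∧
        -- (b) the constant coefficient of ζ is nonzero
        MvPolynomial.coeff 0 ζ ≠ 0 ∧
        -- (c) the Newton polygon condition
        (∀ i j : ℕ, MvPolynomial.coeff (Finsupp.single 0 i + Finsupp.single 1 j) ζ ≠ 0 →
          ((m : ℚ) + 1) * (i : ℚ) ≥ ((m : ℚ) + α) * (j : ℚ) ∧
          ((m : ℚ) + 1) * ((i : ℚ) - (m : ℚ) ^ 2) ≤ (1 - β) * (j : ℚ)) :=
  stmt_11_general k m hm α β h
end
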